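/- If θ₁ ≤ θ₂ ≤ θ₃ are real numbers and the quadratic form q(c₁,c₂,c₃) = θ₁c₁² + θ₂c₂² + θ₃c₃² is negative on at most a one-dimensional subspace of the plane {c₁+c₂+c₃ = 0} (i.e., there is no two-dimensional subspace of this plane on which q is negative definite), then θ₃ ≥ 0. -/

import Mathlib

/-! If `θ₃ < 0`, the ordering makes all three weights negative, so `q` is negative definite
on the whole plane `c₁ + c₂ + c₃ = 0`, which is two-dimensional. -/

open Module

theorem finrank_ker_sum_proj_add_one (K ι : Type*) [Field K] [Fintype ι] [Nonempty ι] :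
    finrank K (LinearMap.ker (∑ i, LinearMap.proj i : (ι → K) →ₗ[K] K)) + 1 =
      Fintype.card ι := by
  have hsum : (∑ i, LinearMap.proj i : Dual K (ι → K)) ≠ 0 := by
    classical
    intro h
    obtain ⟨i⟩ := ‹Nonempty ι›
    simpa [LinearMap.sum_apply] using LinearMap.congr_fun h (Pi.single i 1)
  rw [Dual.finrank_ker_add_one_of_ne_zero hsum, Module.finrank_fintype_fun_eq_card]

theorem sum_mul_sq_neg {R ι : Type*} [Ring R] [LinearOrder R] [IsStrictOrderedRing R]
    [Fintype ι] {θ w : ι → R} (hθ : ∀ i, θ i < 0) (hw : w ≠ 0) :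
    ∑ i, θ i * w i ^ 2 < 0 := by
  obtain ⟨j, hj⟩ := Function.ne_iff.mp hw
  refine Finset.sum_neg' (fun i _ => ?_) ⟨j, Finset.mem_univ j, ?_⟩
  · exact mul_nonpos_of_nonpos_of_nonneg (hθ i).le (sq_nonneg _)
  · exact mul_neg_of_neg_of_pos (hθ j) (sq_pos_of_ne_zero hj)

/-- If θ₁ ≤ θ₂ ≤ θ₃ and the quadratic form q(c) = θ₁c₁² + θ₂c₂² + θ₃c₃² is negative
on at most a one-dimensional subspace of the plane {c₁+c₂+c₃ = 0} (every subspace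
contained in that plane on which q is negative on nonzero vectors has dimension ≤ 1),
then θ₃ ≥ 0. -/
theorem stmt_12 (θ₁ θ₂ θ₃ : ℝ) (h12 : θ₁ ≤ θ₂) (h23 : θ₂ ≤ θ₃)
    (hindex : ∀ W : Submodule ℝ (Fin 3 → ℝ),
      (∀ w ∈ W, w 0 + w 1 + w 2 = 0) →
      (∀ w ∈ W, w ≠ 0 → θ₁ * (w 0) ^ 2 + θ₂ * (w 1) ^ 2 + θ₃ * (w 2) ^ 2 < 0) →
      Module.finrank ℝ W ≤ 1) :
    0 ≤ θ₃ := by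
  by_contra! hθ₃
  have hθ : ∀ i, ![θ₁, θ₂, θ₃] i < 0 := by
    intro i
    fin_cases i <;> dsimp <;> linarith
  have hplane := hindex (LinearMap.ker (∑ i, LinearMap.proj i))
    (fun w hw => by simpa [LinearMap.sum_apply, Fin.sum_univ_three] using hw)
    (fun w _ hw => by simpa [Fin.sum_univ_three] using sum_mul_sq_neg hθ hw)
  have hdim := finrank_ker_sum_proj_add_one ℝ (Fin 3)
  rw [Fintype.card_fin] at hdim
  omega
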